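/- Let H : [0,1] × M → ℝ be continuous on a compact manifold M, with a point x⁻ such that x⁻ is the unique global minimum of H(t,·) for every t, H(t,·) has a nondegenerate minimum at x⁻ in local coordinates (positive-definite Hessian depending continuously on t). Let f : M → ℝ be a smooth Morse function with unique global minimum at x⁻ and f(x⁻) = 0. Then for all sufficiently small ε > 0, the function G(t,x) = H(t,x⁻) + ε f(x) satisfies G(t,x) ≤ H(t,x) for all (t,x), with equality if and only if x = x⁻. -/
import Mathlib


/-- Lemma 4.3: Let `M` be compact, `x⁻` the unique fixed global minimum of
`H(t,·)` for all `t ∈ [0,1]`, nondegenerate in the sense of a uniform quadratic lower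
bound near `x⁻` (coming from the positive definite Hessian), and let `f ≥ 0` be a Morse
function with unique global minimum `x⁻`, `f(x⁻) = 0`, with quadratic upper bound near
`x⁻`.  Then for all sufficiently small `ε > 0`, `G(t,x) = H(t,x⁻) + ε f(x)` satisfies
`G ≤ H` everywhere with equality exactly at `x = x⁻`. -/
theorem comparison_lemma_quasi_autonomous
    {M : Type*} [MetricSpace M] [CompactSpace M]
    (H : ℝ → M → ℝ) (hH : Continuous fun p : ℝ × M => H p.1 p.2)
    (xm : M)
    (hmin : ∀ t ∈ Set.Icc (0:ℝ) 1, ∀ x : M, x ≠ xm → H t xm < H t x)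
    (hnondeg : ∃ c > (0:ℝ), ∃ U ∈ nhds xm, ∀ t ∈ Set.Icc (0:ℝ) 1, ∀ x ∈ U,
      c * dist x xm ^ 2 ≤ H t x - H t xm)
    (f : M → ℝ) (hf : Continuous f)
    (hf0 : f xm = 0) (hfpos : ∀ x : M, x ≠ xm → 0 < f x)
    (hfquad : ∃ C > (0:ℝ), ∃ V ∈ nhds xm, ∀ x ∈ V, f x ≤ C * dist x xm ^ 2) :
    ∃ ε₀ > (0:ℝ), ∀ ε : ℝ, 0 < ε → ε ≤ ε₀ →
      ∀ t ∈ Set.Icc (0:ℝ) 1, ∀ x : M,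
        H t xm + ε * f x ≤ H t x ∧ (H t xm + ε * f x = H t x ↔ x = xm) := by
  obtain ⟨c, hc, U, hU, hUq⟩ := hnondeg
  obtain ⟨C, hC, V, hV, hVq⟩ := hfquad
  obtain ⟨r, hr, hrUV⟩ := Metric.mem_nhds_iff.1 (Filter.inter_mem hU hV)
  -- far set
  set S : Set M := {x : M | r ≤ dist x xm} with hS
  have hScl : IsClosed S := isClosed_le continuous_const (by fun_prop)
  have hKcomp : IsCompact (Set.Icc (0:ℝ) 1 ×ˢ S) :=
    (isCompact_Icc).prod (hScl.isCompact)
  have hg : Continuous fun p : ℝ × M => H p.1 p.2 - H p.1 xm := by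
    apply hH.sub
    exact hH.comp (continuous_fst.prodMk continuous_const)
  have hδ : ∃ δ > (0:ℝ), ∀ t ∈ Set.Icc (0:ℝ) 1, ∀ x : M, r ≤ dist x xm →
      δ ≤ H t x - H t xm := by
    by_cases hK : (Set.Icc (0:ℝ) 1 ×ˢ S).Nonempty
    · obtain ⟨p, hpK, hpmin⟩ := hKcomp.exists_isMinOn hK hg.continuousOn
      obtain ⟨hp1, hp2⟩ := Set.mem_prod.1 hpK
      have hpne : p.2 ≠ xm := by
        intro h
        have : r ≤ dist p.2 xm := hp2
        rw [h, dist_self] at this; linarith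
      refine ⟨H p.1 p.2 - H p.1 xm, by have := hmin p.1 hp1 p.2 hpne; linarith, ?_⟩
      intro t ht x hx
      exact hpmin (show ((t, x) : ℝ × M) ∈ Set.Icc (0:ℝ) 1 ×ˢ S from ⟨ht, hx⟩)
    · exact ⟨1, one_pos, fun t ht x hx => absurd ⟨(t, x), ⟨ht, hx⟩⟩ hK⟩
  obtain ⟨δ, hδpos, hδfar⟩ := hδ
  -- bound on f
  obtain ⟨z, -, hz⟩ := isCompact_univ.exists_isMaxOn ⟨xm, trivial⟩ hf.continuousOn
  set B : ℝ := max (f z) 1 with hB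
  have hBpos : (0:ℝ) < B := lt_of_lt_of_le one_pos (le_max_right _ _)
  have hBle : ∀ x : M, f x ≤ B := fun x =>
    le_trans (hz (Set.mem_univ x)) (le_max_left _ _)
  refine ⟨min (c / (2 * C)) (δ / (2 * B)), lt_min (by positivity) (by positivity),
    fun ε hε hεle t ht x => ?_⟩
  have key : x ≠ xm → ε * f x < H t x - H t xm := by
    intro hxne
    by_cases hnear : dist x xm < r
    · have hxUV := hrUV (Metric.mem_ball.2 hnear)
      have hd : 0 < dist x xm := dist_pos.2 hxne
      have h1 : f x ≤ C * dist x xm ^ 2 := hVq x hxUV.2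
      have h2 : c * dist x xm ^ 2 ≤ H t x - H t xm := hUq t ht x hxUV.1
      have hε1 : ε ≤ c / (2 * C) := le_trans hεle (min_le_left _ _)
      have : ε * f x ≤ (c / (2 * C)) * (C * dist x xm ^ 2) := by
        apply mul_le_mul hε1 h1 (le_of_lt (hfpos x hxne)) (by positivity)
      have heq : (c / (2 * C)) * (C * dist x xm ^ 2) = (c / 2) * dist x xm ^ 2 := by
        field_simp
      nlinarith [mul_pos (half_pos hc) (pow_pos hd 2)]
    · have h2 : δ ≤ H t x - H t xm := hδfar t ht x (not_lt.1 hnear)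
      have hε2 : ε ≤ δ / (2 * B) := le_trans hεle (min_le_right _ _)
      have : ε * f x ≤ (δ / (2 * B)) * B := by
        apply mul_le_mul hε2 (hBle x) (le_of_lt (hfpos x hxne)) (by positivity)
      have heq : (δ / (2 * B)) * B = δ / 2 := by field_simp
      nlinarith
  constructor
  · by_cases hxne : x = xm
    · simp [hxne, hf0]
    · linarith [key hxne]
  · constructor
    · intro heq
      by_contra hxne
      linarith [key hxne]
    · intro hx; simp [hx, hf0]
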